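/- The Bellman error ε_{k,i,t} := Σ_a π(a|O_{i,t-k+2}) Q^π_{i,t-k+2,t}(O_{i,t-k+2},a) − Q^π_{i,t-k+1,t}(O_{i,t-k+1},A_{i,t-k+1}) satisfies |ε_{k,i,t}| ≤ C·π_0^k uniformly in i and t, for some constant C depending only on the uniform bound c on r̃_k functions. -/

import Mathlib

/-!
Substituting the two-way decomposition of `Q` into the Bellman error, the fixed effects
`θ_{k-1,i}, λ_{k-1,t}` cancel against the increments defining `θ_{k,i}, λ_{k,t}`, leaving
`π₀^{k-1} (S - (π₀ r̃_k + π_u I_u + π_v I_v))`, where `S`, `I_u`, `I_v` are averages of `r̃_{k-1}`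
against the policy and the densities `p_{u_i}`, `p_{v_t}`. Each of `S, r̃_k, I_u, I_v` is bounded
by `c` and `π₀ + π_u + π_v = 1`, so the error is at most `2c π₀^{k-1} = (2c/π₀) π₀^k`; the last equality
also holds at `π₀ = 0`, where both sides vanish because `k ≥ 2` and `2c/0 = 0`.
-/

open MeasureTheory Finset

lemma abs_sum_mul_le_of_abs_le {ι : Type*} {s : Finset ι} {w f : ι → ℝ} {c : ℝ}
    (hw : ∀ i ∈ s, 0 ≤ w i) (hw1 : ∑ i ∈ s, w i = 1) (hf : ∀ i ∈ s, |f i| ≤ c) :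
    |∑ i ∈ s, w i * f i| ≤ c :=
  calc |∑ i ∈ s, w i * f i| ≤ ∑ i ∈ s, |w i * f i| := abs_sum_le_sum_abs _ _
    _ ≤ ∑ i ∈ s, w i * c := sum_le_sum fun i hi => by
        rw [abs_mul, abs_of_nonneg (hw i hi)]
        exact mul_le_mul_of_nonneg_left (hf i hi) (hw i hi)
    _ = c := by rw [← sum_mul, hw1, one_mul]

lemma sum_mul_add_const_of_sum_eq_one {ι : Type*} {s : Finset ι} {w f : ι → ℝ} {b : ℝ}
    (hw1 : ∑ i ∈ s, w i = 1) :
    ∑ i ∈ s, w i * (f i + b) = ∑ i ∈ s, w i * f i + b := by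
  rw [sum_congr rfl fun i _ => mul_add (w i) (f i) b, sum_add_distrib, ← sum_mul, hw1, one_mul]

lemma abs_integral_mul_le_of_abs_le {α : Type*} [MeasurableSpace α] {μ : Measure α}
    {f p : α → ℝ} {c : ℝ} (hp : 0 ≤ᵐ[μ] p) (hp1 : ∫ x, p x ∂μ = 1) (hf : ∀ x, |f x| ≤ c) :
    |∫ x, f x * p x ∂μ| ≤ c :=
  calc |∫ x, f x * p x ∂μ| ≤ ∫ x, c * p x ∂μ := by
        rw [← Real.norm_eq_abs]
        refine norm_integral_le_of_norm_le ((integrable_of_integral_eq_one hp1).const_mul c) ?_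
        filter_upwards [hp] with x hx
        rw [Real.norm_eq_abs, abs_mul, abs_of_nonneg hx]
        exact mul_le_mul_of_nonneg_right (hf x) hx
    _ = c := by rw [integral_const_mul, hp1, mul_one]

lemma abs_sub_convex_combination_le {x y z w p q r c : ℝ}
    (hx : |x| ≤ c) (hy : |y| ≤ c) (hz : |z| ≤ c) (hw : |w| ≤ c)
    (hp : 0 ≤ p) (hq : 0 ≤ q) (hr : 0 ≤ r) (hpqr : p + q + r = 1) :
    |x - (p * y + q * z + r * w)| ≤ 2 * c := by
  rw [abs_le] at *
  constructor <;> nlinarith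

lemma pow_mul_eq_div_mul_pow_succ {x : ℝ} {m : ℕ} (hm : m ≠ 0) (a : ℝ) :
    x ^ m * a = a / x * x ^ (m + 1) := by
  rcases eq_or_ne x 0 with rfl | hx
  · simp [zero_pow hm]
  · field_simp
    ring

theorem bellman_error_geometric_bound_general
    {O : Type*} [MeasurableSpace O] {A : Type*} [Fintype A] {I : Type*}
    (μ : Measure O)
    (πu πv π0 : ℝ) (hu : 0 ≤ πu) (hv : 0 ≤ πv) (h0 : 0 ≤ π0)
    (hsum : πu + πv + π0 = 1)
    (pu : I → O → ℝ) (pv : ℕ → O → ℝ) (pol : A → O → ℝ)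
    (hpolnn : ∀ a o, 0 ≤ pol a o) (hpolsum : ∀ o, ∑ a, pol a o = 1)
    (rt : ℕ → O → A → ℝ) (c : ℝ)
    (hc : ∀ k o a, |rt k o a| ≤ c)
    (θ : ℕ → I → ℝ) (lam : ℕ → ℕ → ℝ)
    (hθinc : ∀ k, 1 ≤ k → ∀ i, θ k i = θ (k - 1) i +
      πu * π0 ^ (k - 1) * ∫ o, (∑ a, pol a o * rt (k - 1) o a) * pu i o ∂μ)
    (hlaminc : ∀ k, 1 ≤ k → ∀ t, lam k t = lam (k - 1) t +
      πv * π0 ^ (k - 1) * ∫ o, (∑ a, pol a o * rt (k - 1) o a) * pv t o ∂μ)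
    (hpunn : ∀ i o, 0 ≤ pu i o) (hpuint : ∀ i, ∫ o, pu i o ∂μ = 1)
    (hpvnn : ∀ t o, 0 ≤ pv t o) (hpvint : ∀ t, ∫ o, pv t o ∂μ = 1)
    -- two-way decomposition of the Q-function: Q i (t-k+1) t (o,a) = π0^k r̃_k(o,a) + θ_{k,i} + λ_{k,t}
    (Q : I → ℕ → ℕ → O → A → ℝ)
    (hQ : ∀ k t, 1 ≤ k → k ≤ t → ∀ i o a,
      Q i (t - k + 1) t o a = π0 ^ k * rt k o a + θ k i + lam k t)
    -- observed trajectories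
    (Obs : I → ℕ → O) (Act : I → ℕ → A) :
    ∃ C : ℝ, ∀ k, 2 ≤ k → ∀ i t, k ≤ t →
      |(∑ a, pol a (Obs i (t - k + 2)) * Q i (t - k + 2) t (Obs i (t - k + 2)) a) -
        Q i (t - k + 1) t (Obs i (t - k + 1)) (Act i (t - k + 1))| ≤ C * π0 ^ k := by
  have hpolavg : ∀ m o, |∑ a, pol a o * rt m o a| ≤ c := fun m o =>
    abs_sum_mul_le_of_abs_le (fun a _ => hpolnn a o) (hpolsum o) (fun a _ => hc m o a)
  refine ⟨2 * c / π0, fun k hk i t ht => ?_⟩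
  obtain ⟨m, rfl⟩ : ∃ m, k = m + 1 := ⟨k - 1, by omega⟩
  set o := Obs i (t - (m + 1) + 2)
  have hnext : ∑ a, pol a o * Q i (t - (m + 1) + 2) t o a
      = π0 ^ m * ∑ a, pol a o * rt m o a + (θ m i + lam m t) := by
    rw [show t - (m + 1) + 2 = t - m + 1 by omega]
    simp_rw [hQ m t (by omega) (by omega), add_assoc, sum_mul_add_const_of_sum_eq_one (hpolsum o),
      mul_sum, mul_left_comm (π0 ^ m)]
  rw [hnext, hQ (m + 1) t (by omega) ht, hθinc (m + 1) (by omega), hlaminc (m + 1) (by omega),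
    Nat.add_sub_cancel, ← pow_mul_eq_div_mul_pow_succ (by omega),
    show t - (m + 1) + 1 = t - m by omega]
  set S := ∑ a, pol a o * rt m o a
  set r := rt (m + 1) (Obs i (t - m)) (Act i (t - m))
  set Iu := ∫ x, (∑ a, pol a x * rt m x a) * pu i x ∂μ
  set Iv := ∫ x, (∑ a, pol a x * rt m x a) * pv t x ∂μ
  have hmix : |S - (π0 * r + πu * Iu + πv * Iv)| ≤ 2 * c :=
    abs_sub_convex_combination_le (hpolavg m o) (hc _ _ _)
      (abs_integral_mul_le_of_abs_le (.of_forall (hpunn i)) (hpuint i) (hpolavg m))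
      (abs_integral_mul_le_of_abs_le (.of_forall (hpvnn t)) (hpvint t) (hpolavg m)) h0 hu hv
      (by linarith)
  calc _ = |π0 ^ m * (S - (π0 * r + πu * Iu + πv * Iv))| := by congr 1; ring
    _ = π0 ^ m * |S - (π0 * r + πu * Iu + πv * Iv)| := by
      rw [abs_mul, abs_of_nonneg (pow_nonneg h0 m)]
    _ ≤ π0 ^ m * (2 * c) := mul_le_mul_of_nonneg_left hmix (pow_nonneg h0 m)

/-- The Bellman error
`ε_{k,i,t} = Σ_a π(a|O_{i,t-k+2}) Q^π_{i,t-k+2,t}(O_{i,t-k+2},a) − Q^π_{i,t-k+1,t}(O_{i,t-k+1},A_{i,t-k+1})`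
satisfies `|ε_{k,i,t}| ≤ C·π0^k` uniformly in `i` and `t`, for some constant `C`
depending only on the uniform bound `c` on the `r̃_k` functions. -/
theorem bellman_error_geometric_bound
    {O : Type*} [MeasurableSpace O] {A : Type*} [Fintype A] {I : Type*}
    (μ : Measure O)
    (πu πv π0 : ℝ) (hu : 0 ≤ πu) (hv : 0 ≤ πv) (h0 : 0 ≤ π0)
    (hsum : πu + πv + π0 = 1)
    (pu : I → O → ℝ) (pv : ℕ → O → ℝ) (pol : A → O → ℝ)
    (hpolnn : ∀ a o, 0 ≤ pol a o) (hpolsum : ∀ o, ∑ a, pol a o = 1)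
    (rt : ℕ → O → A → ℝ) (c : ℝ)
    (hc : ∀ k o a, |rt k o a| ≤ c)
    (θ : ℕ → I → ℝ) (lam : ℕ → ℕ → ℝ)
    (hθinc : ∀ k, 1 ≤ k → ∀ i, θ k i = θ (k - 1) i +
      πu * π0 ^ (k - 1) * ∫ o, (∑ a, pol a o * rt (k - 1) o a) * pu i o ∂μ)
    (hlaminc : ∀ k, 1 ≤ k → ∀ t, lam k t = lam (k - 1) t +
      πv * π0 ^ (k - 1) * ∫ o, (∑ a, pol a o * rt (k - 1) o a) * pv t o ∂μ)
    (hpunn : ∀ i o, 0 ≤ pu i o) (hpuint : ∀ i, ∫ o, pu i o ∂μ = 1)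
    (hpvnn : ∀ t o, 0 ≤ pv t o) (hpvint : ∀ t, ∫ o, pv t o ∂μ = 1)
    (hintu : ∀ k i, Integrable (fun o => (∑ a, pol a o * rt k o a) * pu i o) μ)
    (hintv : ∀ k t, Integrable (fun o => (∑ a, pol a o * rt k o a) * pv t o) μ)
    -- two-way decomposition of the Q-function: Q i (t-k+1) t (o,a) = π0^k r̃_k(o,a) + θ_{k,i} + λ_{k,t}
    (Q : I → ℕ → ℕ → O → A → ℝ)
    (hQ : ∀ k t, 1 ≤ k → k ≤ t → ∀ i o a,
      Q i (t - k + 1) t o a = π0 ^ k * rt k o a + θ k i + lam k t)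
    -- observed trajectories
    (Obs : I → ℕ → O) (Act : I → ℕ → A) :
    ∃ C : ℝ, ∀ k, 2 ≤ k → ∀ i t, k ≤ t →
      |(∑ a, pol a (Obs i (t - k + 2)) * Q i (t - k + 2) t (Obs i (t - k + 2)) a) -
        Q i (t - k + 1) t (Obs i (t - k + 1)) (Act i (t - k + 1))| ≤ C * π0 ^ k :=
  bellman_error_geometric_bound_general μ πu πv π0 hu hv h0 hsum pu pv pol hpolnn hpolsum rt c hc θ
    lam hθinc hlaminc hpunn hpuint hpvnn hpvint Q hQ Obs Act
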